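/- arXiv:math/0606269 — 3 statements merged into one kernel-verified Lean document; each statement's English description precedes it below -/
import Mathlib

section
/- Let Δ ⊆ ℝ^n be a Newton polyhedron at the origin with σ > 0 defined by (1/σ,...,1/σ) being the first point of the diagonal in Δ. Let τ be a face of Δ, let R_1,...,R_s ∈ τ, and let β_1,...,β_s ≥ 0 satisfy Σ_j β_j R_j ≤ (1/σ,...,1/σ) coordinatewise. Then Σ_j β_j ≤ 1. -/
open MvPolynomial Real Complex Finset MeasureTheory
open scoped Classical

noncomputable section

/-- `Δ = conv S + ℝ₊ⁿ`. -/
def NPoly {n : ℕ} (S : Set (Fin n → ℝ)) : Set (Fin n → ℝ) :=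
  {x | ∃ a ∈ convexHull ℝ S, ∃ b : Fin n → ℝ, (∀ i, 0 ≤ b i) ∧ x = a + b}

/-- `τ` is a face of `Δ`: either `Δ` itself or a nonempty set
`{x ∈ Δ | L x = 0}` for an affine `L ≥ 0` on `Δ`. -/
def IsFaceOf {n : ℕ} (Δ τ : Set (Fin n → ℝ)) : Prop :=
  τ = Δ ∨ (τ.Nonempty ∧ ∃ (a₀ : ℝ) (a : Fin n → ℝ),
    (∀ x ∈ Δ, 0 ≤ a₀ + ∑ i, a i * x i) ∧
    τ = {x | x ∈ Δ ∧ a₀ + ∑ i, a i * x i = 0})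

/-- Support of `f` viewed inside `ℝⁿ`. -/
def suppSet {n : ℕ} (f : MvPolynomial (Fin n) ℤ) : Set (Fin n → ℝ) :=
  {x | ∃ d ∈ f.support, x = fun i => (d i : ℝ)}

/-- Newton polyhedron of `f` at the origin. -/
def NewtonΔ {n : ℕ} (f : MvPolynomial (Fin n) ℤ) : Set (Fin n → ℝ) :=
  NPoly (suppSet f)

/-- `N(k) = inf_{i ∈ Δ} k·i`. -/
def Nfun {n : ℕ} (Δ : Set (Fin n → ℝ)) (k : Fin n → ℝ) : ℝ :=
  sInf {y | ∃ x ∈ Δ, y = ∑ i, k i * x i}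

/-- `F(k) = {i ∈ Δ | k·i = N(k)}`. -/
def Ffun {n : ℕ} (Δ : Set (Fin n → ℝ)) (k : Fin n → ℝ) : Set (Fin n → ℝ) :=
  {x | x ∈ Δ ∧ ∑ i, k i * x i = Nfun Δ k}

/-- `f_τ`: the part of `f` supported on `τ`. -/
def faceRestrict {n : ℕ} (f : MvPolynomial (Fin n) ℤ) (τ : Set (Fin n → ℝ)) :
    MvPolynomial (Fin n) ℤ :=
  ∑ d ∈ f.support, if (fun i => (d i : ℝ)) ∈ τ then monomial d (coeff d f) else 0

/-- `S_f(N) = N^{-n} ∑_{x ∈ {0,…,N-1}ⁿ} exp(2πi f(x)/N)`. -/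
def Sexp {n : ℕ} (f : MvPolynomial (Fin n) ℤ) (N : ℕ) : ℂ :=
  (N : ℂ)⁻¹ ^ n * ∑ x : Fin n → Fin N,
    Complex.exp (2 * π * I * ((eval (fun i => ((x i : ℕ) : ℤ)) f : ℤ) : ℂ) / N)

/-- `f` is nondegenerate w.r.t. all faces of its Newton polyhedron:
no `f_τ` has a critical point on the complex torus. -/
def Nondeg {n : ℕ} (f : MvPolynomial (Fin n) ℤ) : Prop :=
  ∀ τ : Set (Fin n → ℝ), IsFaceOf (NewtonΔ f) τ →
    ¬ ∃ x : Fin n → ℂ, (∀ i, x i ≠ 0) ∧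
      ∀ i, eval x (pderiv i (MvPolynomial.map (Int.castRingHom ℂ) (faceRestrict f τ))) = 0

/-- `A(p,m,τ) = ∑_{k ∈ ℕⁿ, F(k)=τ, N(k) ≥ m} p^{-ν(k)}`. -/
def Afun {n : ℕ} (f : MvPolynomial (Fin n) ℤ) (p m : ℕ) (τ : Set (Fin n → ℝ)) : ℝ :=
  ∑' k : Fin n → ℕ,
    if Ffun (NewtonΔ f) (fun i => (k i : ℝ)) = τ ∧
        (m : ℝ) ≤ Nfun (NewtonΔ f) (fun i => (k i : ℝ))
    then ((p : ℝ) ^ (∑ i, k i))⁻¹ else 0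

/-- `B(p,m,τ) = ∑_{k ∈ ℕⁿ, F(k)=τ, N(k) = m-1} p^{-ν(k)}`. -/
def Bfun {n : ℕ} (f : MvPolynomial (Fin n) ℤ) (p m : ℕ) (τ : Set (Fin n → ℝ)) : ℝ :=
  ∑' k : Fin n → ℕ,
    if Ffun (NewtonΔ f) (fun i => (k i : ℝ)) = τ ∧
        Nfun (NewtonΔ f) (fun i => (k i : ℝ)) = (m : ℝ) - 1
    then ((p : ℝ) ^ (∑ i, k i))⁻¹ else 0

/-- `E(p,f_τ) = (p-1)^{-n} ∑_{x ∈ {1,…,p-1}ⁿ} exp(2πi f_τ(x)/p)`. -/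
def Efun {n : ℕ} (f : MvPolynomial (Fin n) ℤ) (p : ℕ) (τ : Set (Fin n → ℝ)) : ℂ :=
  ((p : ℂ) - 1)⁻¹ ^ n * ∑ x : Fin n → Fin (p - 1),
    Complex.exp (2 * π * I *
      ((eval (fun i => ((x i : ℕ) + 1 : ℤ)) (faceRestrict f τ) : ℤ) : ℂ) / p)

/-- if points `R j` of a face `τ` and `β j ≥ 0` satisfy
`∑ β j • R j ≤ (1/σ,…,1/σ)` coordinatewise, then `∑ β j ≤ 1`. -/
theorem sum_beta_le_one
    (n : ℕ) (f : MvPolynomial (Fin n) ℤ) (hf : f ≠ 0)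
    (hf0 : constantCoeff f = 0)
    (σ : ℝ) (hσ : 0 < σ)
    (hfirst : IsLeast {t : ℝ | 0 ≤ t ∧ (fun _ : Fin n => t) ∈ NewtonΔ f} (1 / σ))
    (τ : Set (Fin n → ℝ)) (hτ : IsFaceOf (NewtonΔ f) τ)
    (s : ℕ) (R : Fin s → (Fin n → ℝ)) (hR : ∀ j, R j ∈ τ)
    (β : Fin s → ℝ) (hβ : ∀ j, 0 ≤ β j)
    (hle : ∀ i, ∑ j, β j * R j i ≤ 1 / σ) :
    ∑ j, β j ≤ 1 := by
  by_contra hB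
  push_neg at hB
  -- n ≠ 0
  have hn : n ≠ 0 := by
    intro h
    subst h
    have : f = C (constantCoeff f) := f.eq_C_of_isEmpty
    rw [hf0, map_zero] at this
    exact hf this
  haveI : Nonempty (Fin n) := ⟨⟨0, Nat.pos_of_ne_zero hn⟩⟩
  set B := ∑ j, β j with hBdef
  have hBpos : (0 : ℝ) < B := lt_trans one_pos hB
  -- Δ is convex
  have hconv : Convex ℝ (NewtonΔ f) := by
    rintro x hx y hy lam mu hlam hmu hsum
    obtain ⟨a, ha, b, hb, rfl⟩ := hx
    obtain ⟨a', ha', b', hb', rfl⟩ := hy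
    refine ⟨lam • a + mu • a', convex_convexHull ℝ _ ha ha' hlam hmu hsum,
      lam • b + mu • b', fun i => add_nonneg (mul_nonneg hlam (hb i)) (mul_nonneg hmu (hb' i)), ?_⟩
    funext i
    simp only [Pi.add_apply, Pi.smul_apply, smul_eq_mul]
    ring
  -- τ ⊆ Δ
  have hτΔ : τ ⊆ NewtonΔ f := by
    rcases hτ with h | ⟨_, a₀, a, _, h⟩
    · exact h ▸ subset_rfl
    · rw [h]; exact fun x hx => hx.1
  -- the convex combination P = ∑ (β j / B) • R j ∈ Δ
  have hwnn : ∀ j ∈ Finset.univ, 0 ≤ β j / B := fun j _ => div_nonneg (hβ j) hBpos.le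
  have hwsum : ∑ j, β j / B = 1 := by
    rw [← Finset.sum_div, ← hBdef, div_self hBpos.ne']
  have hP : (∑ j, (β j / B) • R j) ∈ NewtonΔ f :=
    hconv.sum_mem hwnn hwsum (fun j _ => hτΔ (hR j))
  set P : Fin n → ℝ := ∑ j, (β j / B) • R j with hPdef
  have hPi : ∀ i, P i = (∑ j, β j * R j i) / B := by
    intro i
    rw [hPdef]
    simp only [Finset.sum_apply, Pi.smul_apply, smul_eq_mul, Finset.sum_div]
    congr 1; funext j; ring
  -- points of Δ have nonneg coordinates
  have hhull : convexHull ℝ (suppSet f) ⊆ {x : Fin n → ℝ | ∀ i, 0 ≤ x i} := by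
    apply convexHull_min
    · rintro x ⟨d, _, rfl⟩ i
      exact Nat.cast_nonneg _
    · rintro x hx y hy lam mu hlam hmu _ i
      simp only [Pi.add_apply, Pi.smul_apply, smul_eq_mul]
      exact add_nonneg (mul_nonneg hlam (hx i)) (mul_nonneg hmu (hy i))
  have hPnn : ∀ i, 0 ≤ P i := by
    obtain ⟨a, ha, b, hb, hPe⟩ := hP
    intro i
    rw [hPe]
    exact add_nonneg (hhull ha i) (hb i)
  -- t = max coordinate of P
  set t : ℝ := Finset.univ.sup' Finset.univ_nonempty (fun i => P i) with htdef
  have ht0 : 0 ≤ t := le_trans (hPnn (Classical.arbitrary _))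
    (Finset.le_sup' _ (Finset.mem_univ _))
  have htΔ : (fun _ : Fin n => t) ∈ NewtonΔ f := by
    obtain ⟨a, ha, b, hb, hPe⟩ := hP
    refine ⟨a, ha, fun i => b i + (t - P i), ?_, ?_⟩
    · intro i
      have h1 : P i ≤ t := Finset.le_sup' _ (Finset.mem_univ i)
      have h2 := hb i
      show 0 ≤ b i + (t - P i)
      linarith
    · funext i
      have : P i = a i + b i := by rw [hPe]; rfl
      simp only [Pi.add_apply]
      linarith
  have hle' : 1 / σ ≤ t := hfirst.2 ⟨ht0, htΔ⟩
  have hlt : t < 1 / σ := by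
    rw [htdef, Finset.sup'_lt_iff]
    intro i _
    rw [hPi i]
    calc (∑ j, β j * R j i) / B ≤ (1 / σ) / B := by
            gcongr
            exact hle i
      _ < 1 / σ := div_lt_self (by positivity) hB
  linarith
end
end

section
/- Let f be a polynomial over ℤ in n variables with f(0)=0, with Newton polyhedron Δ₀(f), and for k ∈ ℝ₊^n define N(k) = min_{i ∈ Δ₀(f)} k·i and F(k) = {i ∈ Δ₀(f) : k·i = N(k)}. Let τ be a face of Δ₀(f), let σ = σ(f) and σ(f_τ) be the diagonal exponents of Δ₀(f) and Δ₀(f_τ). Then for every k ∈ ℕ^n with F(k) = τ one has ν(k) ≥ σ(N(k) + 1) − σ(f_τ), where ν(k) = k₁ + ... + k_n. -/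
open MvPolynomial Real Complex Finset MeasureTheory
open scoped Classical

noncomputable section

lemma coeff_faceRestrict {n : ℕ} (f : MvPolynomial (Fin n) ℤ) (τ : Set (Fin n → ℝ))
    (d : Fin n →₀ ℕ) :
    coeff d (faceRestrict f τ) = if (fun i => (d i : ℝ)) ∈ τ then coeff d f else 0 := by
  classical
  unfold faceRestrict
  rw [MvPolynomial.coeff_sum]
  by_cases hd : d ∈ f.support
  · rw [Finset.sum_eq_single d]
    · split_ifs <;> simp [MvPolynomial.coeff_monomial]
    · intro e he hne
      by_cases h : (fun i => (e i : ℝ)) ∈ τ <;>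
        simp [h, MvPolynomial.coeff_monomial, hne]
    · intro h; exact absurd hd h
  · have h0 : coeff d f = 0 := MvPolynomial.notMem_support_iff.mp hd
    rw [Finset.sum_eq_zero]
    · simp [h0]
    · intro e he
      have hne : e ≠ d := fun hne => hd (hne ▸ he)
      by_cases h : (fun i => (e i : ℝ)) ∈ τ <;>
        simp [h, MvPolynomial.coeff_monomial, hne]

lemma dot_ge_on_hull {n : ℕ} (k : Fin n → ℝ) (hk : ∀ i, 0 ≤ k i)
    (s : Set (Fin n → ℝ)) (c : ℝ) (hs : ∀ x ∈ s, c ≤ ∑ i, k i * x i) :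
    ∀ a ∈ convexHull ℝ s, c ≤ ∑ i, k i * a i := by
  intro a ha
  have hC : Convex ℝ {x : Fin n → ℝ | c ≤ ∑ i, k i * x i} := by
    intro x hx y hy a b ha hb hab
    simp only [Set.mem_setOf_eq] at *
    have h1 : ∑ i, k i * (a • x + b • y) i
        = a * (∑ i, k i * x i) + b * (∑ i, k i * y i) := by
      simp only [Pi.add_apply, Pi.smul_apply, smul_eq_mul, Finset.mul_sum,
        ← Finset.sum_add_distrib]
      exact Finset.sum_congr rfl (fun i _ => by ring)
    rw [h1]
    have h2 : a * c + b * c = c := by rw [← add_mul, hab, one_mul]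
    nlinarith [mul_le_mul_of_nonneg_left hx ha, mul_le_mul_of_nonneg_left hy hb]
  exact convexHull_min hs hC ha

/-- Theorem `len`: for `k ∈ ℕⁿ` with `F(k) = τ`,
`ν(k) ≥ σ(N(k)+1) - σ(f_τ)`. -/
theorem nu_ge_sigma_N_add_one_sub_sigma_tau
    (n : ℕ) (f : MvPolynomial (Fin n) ℤ) (hf : f ≠ 0)
    (hf0 : constantCoeff f = 0)
    (σ : ℝ) (hσ : 0 < σ)
    (hfirst : IsLeast {t : ℝ | 0 ≤ t ∧ (fun _ : Fin n => t) ∈ NewtonΔ f} (1 / σ))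
    (τ : Set (Fin n → ℝ)) (hτ : IsFaceOf (NewtonΔ f) τ)
    (στ : ℝ) (hστ : 0 < στ)
    (hfirstτ : IsLeast
      {t : ℝ | 0 ≤ t ∧ (fun _ : Fin n => t) ∈ NewtonΔ (faceRestrict f τ)} (1 / στ))
    (k : Fin n → ℕ) (hk : Ffun (NewtonΔ f) (fun i => (k i : ℝ)) = τ) :
    σ * (Nfun (NewtonΔ f) (fun i => (k i : ℝ)) + 1) - στ ≤ (∑ i, k i : ℕ) := by
  classical
  set K : Fin n → ℝ := fun i => (k i : ℝ) with hK
  have hK0 : ∀ i, 0 ≤ K i := fun i => Nat.cast_nonneg _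
  set Nk : ℝ := Nfun (NewtonΔ f) K with hNkdef
  have hsupp : f.support.Nonempty := MvPolynomial.support_nonempty.mpr hf
  -- support points are in Δ
  have hsΔ : ∀ d ∈ f.support, (fun i => (d i : ℝ)) ∈ NewtonΔ f := by
    intro d hd
    exact ⟨_, subset_convexHull ℝ _ ⟨d, hd, rfl⟩, 0, fun i => le_rfl, by simp⟩
  -- the minimum of k·d over the support
  set M : ℕ := f.support.inf' hsupp (fun d => ∑ i, k i * d i) with hMdef
  have hMle : ∀ x ∈ NewtonΔ f, (M : ℝ) ≤ ∑ i, K i * x i := by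
    rintro x ⟨a, ha, b, hb, rfl⟩
    have hMle' : ∀ y ∈ suppSet f, (M : ℝ) ≤ ∑ i, K i * y i := by
      rintro y ⟨d, hd, rfl⟩
      have h1 : M ≤ ∑ i, k i * d i := Finset.inf'_le _ hd
      have : ((M : ℝ)) ≤ ((∑ i, k i * d i : ℕ) : ℝ) := by exact_mod_cast h1
      refine this.trans (le_of_eq ?_)
      push_cast; rfl
    have hma : (M : ℝ) ≤ ∑ i, K i * a i := dot_ge_on_hull K hK0 _ _ hMle' a ha
    have hmb : 0 ≤ ∑ i, K i * b i :=
      Finset.sum_nonneg fun i _ => mul_nonneg (hK0 i) (hb i)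
    have : ∑ i, K i * (a + b) i = (∑ i, K i * a i) + ∑ i, K i * b i := by
      simp only [Pi.add_apply, mul_add, Finset.sum_add_distrib]
    rw [this]; linarith
  -- Δ nonempty witness for the infimum
  have hsupp' := hsupp
  obtain ⟨d₀, hd₀⟩ := hsupp'
  have hne : {y | ∃ x ∈ NewtonΔ f, y = ∑ i, K i * x i}.Nonempty :=
    ⟨_, _, hsΔ d₀ hd₀, rfl⟩
  have hbdd : BddBelow {y | ∃ x ∈ NewtonΔ f, y = ∑ i, K i * x i} := by
    refine ⟨(M : ℝ), ?_⟩
    rintro y ⟨x, hx, rfl⟩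
    exact hMle x hx
  have hNle : ∀ x ∈ NewtonΔ f, Nk ≤ ∑ i, K i * x i := by
    intro x hx
    exact csInf_le hbdd ⟨x, hx, rfl⟩
  have hNgeM : (M : ℝ) ≤ Nk := le_csInf hne (by rintro y ⟨x, hx, rfl⟩; exact hMle x hx)
  -- Nk = M
  have hNM : Nk = (M : ℝ) := by
    obtain ⟨d₁, hd₁, hd₁M⟩ := f.support.exists_mem_eq_inf' hsupp (fun d => ∑ i, k i * d i)
    have h1 : Nk ≤ ∑ i, K i * (d₁ i : ℝ) := hNle _ (hsΔ d₁ hd₁)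
    have h2 : ∑ i, K i * (d₁ i : ℝ) = (M : ℝ) := by
      rw [hMdef, hd₁M]; push_cast; rfl
    linarith [h1, h2, hNgeM]
  -- membership in τ vs dot products
  have hmemτ : ∀ d : Fin n →₀ ℕ, d ∈ f.support →
      ((fun i => (d i : ℝ)) ∈ τ ↔ ∑ i, K i * (d i : ℝ) = Nk) := by
    intro d hd
    rw [← hk]
    constructor
    · intro h; exact h.2
    · intro h; exact ⟨hsΔ d hd, h⟩
  -- off τ: k·d ≥ N + 1 (integrality)
  have hoff : ∀ d : Fin n →₀ ℕ, d ∈ f.support → (fun i => (d i : ℝ)) ∉ τ →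
      Nk + 1 ≤ ∑ i, K i * (d i : ℝ) := by
    intro d hd hdτ
    have h1 : Nk ≤ ∑ i, K i * (d i : ℝ) := hNle _ (hsΔ d hd)
    have h2 : ∑ i, K i * (d i : ℝ) ≠ Nk := fun h => hdτ ((hmemτ d hd).mpr h)
    have h3 : ∑ i, K i * (d i : ℝ) = ((∑ i, k i * d i : ℕ) : ℝ) := by push_cast; rfl
    rw [hNM] at h1 h2 ⊢
    rw [h3] at h1 h2 ⊢
    have h4 : M < ∑ i, k i * d i := by
      by_contra h
      push_neg at h
      have : (∑ i, k i * d i : ℕ) = M := le_antisymm h (by exact_mod_cast h1)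
      exact h2 (by exact_mod_cast this)
    have : (M + 1 : ℕ) ≤ ∑ i, k i * d i := h4
    exact_mod_cast this
  -- decompose the diagonal point (1/σ, ..., 1/σ)
  obtain ⟨a, haH, b, hb, hab⟩ := hfirst.1.2
  rw [_root_.convexHull_eq] at haH
  obtain ⟨ι, t, w, z, hw0, hw1, hzs, hcm⟩ := haH
  have hacm : a = ∑ i ∈ t, w i • z i := by
    rw [← hcm, Finset.centerMass_eq_of_sum_1 _ _ hw1]
  choose D hD1 hD2 using fun i hi => hzs i hi
  -- partition
  set tτ : Finset ι := t.filter (fun i => z i ∈ τ) with htτ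
  set β : ℝ := ∑ i ∈ tτ, w i with hβdef
  set α : ℝ := ∑ i ∈ t.filter (fun i => z i ∉ τ), w i with hαdef
  have hsplit : β + α = 1 := by
    rw [hβdef, hαdef, htτ, Finset.sum_filter_add_sum_filter_not, hw1]
  have hβ0 : 0 ≤ β :=
    Finset.sum_nonneg fun i hi => hw0 i (Finset.mem_filter.mp hi).1
  have hα0 : 0 ≤ α :=
    Finset.sum_nonneg fun i hi => hw0 i (Finset.mem_filter.mp hi).1
  -- z coordinates are nonneg
  have hz0 : ∀ i ∈ t, ∀ j, 0 ≤ z i j := by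
    intro i hi j
    rw [hD2 i hi]
    exact Nat.cast_nonneg _
  -- dot products of z
  have hzτ : ∀ i ∈ tτ, ∑ j, K j * z i j = Nk := by
    intro i hi
    obtain ⟨hit, hiτ⟩ := Finset.mem_filter.mp hi
    have := (hmemτ (D i hit) (hD1 i hit)).mp (by rw [← hD2 i hit]; exact hiτ)
    rw [hD2 i hit]; exact this
  have hzoff : ∀ i ∈ t.filter (fun i => z i ∉ τ), Nk + 1 ≤ ∑ j, K j * z i j := by
    intro i hi
    obtain ⟨hit, hiτ⟩ := Finset.mem_filter.mp hi
    have := hoff (D i hit) (hD1 i hit) (by rw [← hD2 i hit]; exact hiτ)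
    rw [hD2 i hit]; exact this
  -- key dot product computation
  have hka : ∑ j, K j * a j = ∑ i ∈ t, w i * (∑ j, K j * z i j) := by
    rw [hacm]
    simp only [Finset.sum_apply, Pi.smul_apply, smul_eq_mul, Finset.mul_sum]
    rw [Finset.sum_comm]
    exact Finset.sum_congr rfl fun i _ => Finset.sum_congr rfl fun j _ => by ring
  have hkalb : β * Nk + α * (Nk + 1) ≤ ∑ j, K j * a j := by
    rw [hka, ← Finset.sum_filter_add_sum_filter_not t (fun i => z i ∈ τ)]
    have h1 : β * Nk = ∑ i ∈ tτ, w i * (∑ j, K j * z i j) := by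
      rw [hβdef, Finset.sum_mul]
      exact Finset.sum_congr rfl fun i hi => by rw [hzτ i hi]
    have h2 : α * (Nk + 1) ≤ ∑ i ∈ t.filter (fun i => z i ∉ τ), w i * (∑ j, K j * z i j) := by
      rw [hαdef, Finset.sum_mul]
      refine Finset.sum_le_sum fun i hi => ?_
      have hw : 0 ≤ w i := hw0 i (Finset.mem_filter.mp hi).1
      have := hzoff i hi
      nlinarith
    rw [h1]
    linarith
  -- ν / σ ≥ N + α
  have hkb : 0 ≤ ∑ j, K j * b j :=
    Finset.sum_nonneg fun j _ => mul_nonneg (hK0 j) (hb j)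
  have hdiag : ∑ j, K j * (1 / σ) = (∑ j, K j) / σ := by
    rw [Finset.sum_div]
    exact Finset.sum_congr rfl fun j _ => mul_one_div _ _
  have hν1 : Nk + α ≤ (∑ j, K j) / σ := by
    have h1 : ∑ j, K j * ((1 : ℝ) / σ) = (∑ j, K j * a j) + ∑ j, K j * b j := by
      have : ∀ j, (1 : ℝ) / σ = a j + b j := fun j => congrFun hab j
      calc ∑ j, K j * ((1 : ℝ) / σ) = ∑ j, K j * (a j + b j) :=
            Finset.sum_congr rfl fun j _ => by rw [this j]
        _ = (∑ j, K j * a j) + ∑ j, K j * b j := by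
            simp only [mul_add, Finset.sum_add_distrib]
    rw [← hdiag, h1]
    nlinarith
  -- key: σ * β ≤ στ
  have hkey : σ * β ≤ στ := by
    rcases eq_or_lt_of_le hβ0 with hβz | hβpos
    · rw [← hβz]; simpa using hστ.le
    · -- the diagonal point of Δ(f_τ)
      have hzmem : ∀ i ∈ tτ, z i ∈ suppSet (faceRestrict f τ) := by
        intro i hi
        obtain ⟨hit, hiτ⟩ := Finset.mem_filter.mp hi
        refine ⟨D i hit, ?_, hD2 i hit⟩
        rw [MvPolynomial.mem_support_iff, coeff_faceRestrict, if_pos (by rw [← hD2 i hit]; exact hiτ)]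
        exact MvPolynomial.mem_support_iff.mp (hD1 i hit)
      have hβpos' : 0 < ∑ i ∈ tτ, w i := by rw [← hβdef]; exact hβpos
      have hmem : tτ.centerMass w z ∈ convexHull ℝ (suppSet (faceRestrict f τ)) :=
        Finset.centerMass_mem_convexHull _
          (fun i hi => hw0 i (Finset.mem_filter.mp hi).1) hβpos' hzmem
      set a' : Fin n → ℝ := tτ.centerMass w z with ha'
      have ha'le : ∀ j, a' j ≤ 1 / (σ * β) := by
        intro j
        have ha'j : a' j = β⁻¹ * ∑ i ∈ tτ, w i * z i j := by
          rw [ha', Finset.centerMass, ← hβdef]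
          simp only [Pi.smul_apply, Finset.sum_apply, smul_eq_mul]
        have hS : ∑ i ∈ tτ, w i * z i j ≤ ∑ i ∈ t, w i * z i j := by
          refine Finset.sum_le_sum_of_subset_of_nonneg (Finset.filter_subset _ _) ?_
          intro i hi _
          exact mul_nonneg (hw0 i hi) (hz0 i hi j)
        have haj : ∑ i ∈ t, w i * z i j = a j := by
          rw [hacm]
          simp only [Finset.sum_apply, Pi.smul_apply, smul_eq_mul]
        have hajle : a j ≤ 1 / σ := by
          have : (1 : ℝ) / σ = a j + b j := congrFun hab j
          linarith [hb j]
        rw [ha'j]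
        have : β⁻¹ * ∑ i ∈ tτ, w i * z i j ≤ β⁻¹ * (1 / σ) := by
          apply mul_le_mul_of_nonneg_left _ (inv_nonneg.mpr hβ0)
          rw [haj] at hS
          linarith
        refine this.trans (le_of_eq ?_)
        field_simp
      have hmem' : (fun _ : Fin n => 1 / (σ * β)) ∈ NewtonΔ (faceRestrict f τ) := by
        refine ⟨a', hmem, fun j => 1 / (σ * β) - a' j, fun j => by linarith [ha'le j], ?_⟩
        funext j
        simp
      have hσβ : 0 < σ * β := mul_pos hσ hβpos
      have hle : 1 / στ ≤ 1 / (σ * β) :=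
        hfirstτ.2 ⟨by positivity, hmem'⟩
      exact le_of_one_div_le_one_div hστ hle
  -- conclude
  have hcast : ((∑ i, k i : ℕ) : ℝ) = ∑ j, K j := by push_cast; rfl
  rw [hcast]
  have hν2 : σ * (Nk + α) ≤ ∑ j, K j := by
    have := mul_le_mul_of_nonneg_left hν1 hσ.le
    rw [mul_div_assoc'] at this
    calc σ * (Nk + α) ≤ σ * (∑ j, K j) / σ := this
      _ = ∑ j, K j := by field_simp
  have hαβ : σ * β + σ * α = σ := by
    rw [← mul_add, hsplit, mul_one]
  linarith
end
end

section
/- Let f ∈ ℤ[x₁,...,x_n] with f(0)=0 be nondegenerate w.r.t. all faces of Δ₀(f), let σ = σ(f) and let κ = dim{k ∈ ℝ₊^n : ν(k) = σ N(k)} (equivalently, the codimension of the smallest face F₀(f) of Δ₀(f) meeting the diagonal). Then κ ≥ 1 and there exists c > 0 such that for all integers m > 0, all faces τ of Δ₀(f), and all sufficiently large primes p: A(p,m,τ) := Σ_{k ∈ ℕ^n, F(k)=τ, N(k) ≥ m} p^{−ν(k)} ≤ c p^{−mσ} m^{κ−1}. -/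
open MvPolynomial Real Complex Finset MeasureTheory
open scoped Classical

noncomputable section

/-!
Write `ν(k) = ∑ kᵢ` and `E = {k ≥ 0 | ν(k) = σ N(k)}`. Since the diagonal point `(1/σ, …, 1/σ)`
lies in the Newton polyhedron, `ν ≥ σ N` on the orthant, and a supporting hyperplane at that
boundary point gives `a ∈ E` with `ν(a) > 0`; hence `κ ≥ 1` and `span E ∩ ker ν` has dimension
`κ - 1`. A lattice point with `ν(k) = s` and `N(k) ≥ m` violates the finitely many linear
inequalities cutting out `E` by at most `s - σ m`, so by Hoffman's bound (via Weyl's theorem) it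
lies within `O(s - σ m)` of `E`. Such points are determined up to `O(s - σ m)` by `κ - 1` of their
coordinates, so there are `O((s - σ m + 1)ⁿ (s + 1)^(κ - 1))` of them, and summing against `p^(-s)`
over `s ≥ σ m` gives `c p^(-σ m) m^(κ - 1)`, whatever the face `F(k)`.
-/

section Cones

variable {V : Type*} [AddCommGroup V] [Module ℝ V]

lemma mem_hull_finset_iff {s : Finset V} {x : V} :
    x ∈ PointedCone.hull ℝ (s : Set V) ↔ ∃ c : V → ℝ, 0 ≤ c ∧ ∑ v ∈ s, c v • v = x := by
  constructor
  · intro hx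
    obtain ⟨c, -, rfl⟩ := Submodule.mem_span_finset.mp hx
    exact ⟨fun v => c v, fun v => (c v).2, rfl⟩
  · rintro ⟨c, hc, rfl⟩
    exact Submodule.sum_mem _ fun v hv =>
      PointedCone.smul_mem _ (hc v) (PointedCone.subset_hull hv)

lemma sum_smul_sub_smul_eq (P Q : Finset V) (c : V → ℝ) (φ : Module.Dual ℝ V) :
    ∑ uv ∈ P ×ˢ Q, (c uv.1 * c uv.2) • (φ uv.1 • uv.2 - φ uv.2 • uv.1) =
      φ (∑ u ∈ P, c u • u) • ∑ v ∈ Q, c v • v - φ (∑ v ∈ Q, c v • v) • ∑ u ∈ P, c u • u := by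
  calc _ = ∑ u ∈ P, ∑ v ∈ Q, ((c u * φ u) • (c v • v) - (c v * φ v) • (c u • u)) := by
        rw [sum_product]
        refine sum_congr rfl fun u _ => sum_congr rfl fun v _ => ?_
        simp only [smul_sub, smul_smul]
        congr 2 <;> ring
    _ = _ := by
        simp only [sum_sub_distrib, ← smul_sum, ← sum_smul, map_sum, map_smul, smul_eq_mul]

def fourierMotzkin (s : Finset V) (φ : Module.Dual ℝ V) : Finset V :=
  s.filter (fun v => 0 ≤ φ v) ∪ (s.filter (fun v => 0 ≤ φ v) ×ˢ s.filter (fun v => φ v < 0)).image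
    fun uv => φ uv.1 • uv.2 - φ uv.2 • uv.1

lemma hull_fourierMotzkin_le (s : Finset V) (φ : Module.Dual ℝ V) :
    PointedCone.hull ℝ (fourierMotzkin s φ : Set V) ≤
      PointedCone.hull ℝ (s : Set V) ⊓ (PointedCone.positive ℝ ℝ).comap φ := by
  refine Submodule.span_le.mpr fun x hx => ?_
  rcases mem_union.mp hx with hx | hx
  · obtain ⟨hxs, hφx⟩ := mem_filter.mp hx
    exact ⟨PointedCone.subset_hull hxs, hφx⟩
  obtain ⟨⟨u, v⟩, huv, rfl⟩ := mem_image.mp hx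
  simp only [mem_product, mem_filter] at huv
  obtain ⟨⟨hus, hφu⟩, hvs, hφv⟩ := huv
  refine ⟨?_, ?_⟩
  · rw [sub_eq_add_neg, ← neg_smul]
    exact add_mem (PointedCone.smul_mem _ hφu (PointedCone.subset_hull hvs))
      (PointedCone.smul_mem _ (by linarith) (PointedCone.subset_hull hus))
  · show 0 ≤ φ (φ u • v - φ v • u)
    simp only [map_sub, map_smul, smul_eq_mul]
    linarith [mul_comm (φ u) (φ v)]

/-- Writing `x = xP + xQ` according to the sign of `φ` on the generators, `φ xP ≥ -φ xQ ≥ 0` and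
`φ xP • x = (φ xP + φ xQ) • xP + (φ xP • xQ - φ xQ • xP)`, where the last term is a nonnegative
combination of the new generators `φ u • v - φ v • u`. -/
lemma subset_hull_fourierMotzkin (s : Finset V) (φ : Module.Dual ℝ V) :
    (PointedCone.hull ℝ (s : Set V) : Set V) ∩ {x | 0 ≤ φ x} ⊆
      PointedCone.hull ℝ (fourierMotzkin s φ : Set V) := by
  rintro x ⟨hx, hφx⟩
  obtain ⟨c, hc, rfl⟩ := mem_hull_finset_iff.mp hx
  set P := s.filter (fun v => 0 ≤ φ v)
  set Q := s.filter (fun v => φ v < 0)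
  set H := PointedCone.hull ℝ (fourierMotzkin s φ : Set V)
  set xP := ∑ v ∈ P, c v • v
  set xQ := ∑ v ∈ Q, c v • v
  have hsplit : ∑ v ∈ s, c v • v = xP + xQ := by
    simp only [xP, xQ, P, Q, ← not_le]
    exact (sum_filter_add_sum_filter_not _ _ _).symm
  have hxP : xP ∈ H := Submodule.sum_mem _ fun v hv =>
    H.smul_mem (hc v) (PointedCone.subset_hull (mem_union_left _ hv))
  have hpairs : φ xP • xQ - φ xQ • xP ∈ H := sum_smul_sub_smul_eq P Q c φ ▸
    Submodule.sum_mem _ fun uv huv => H.smul_mem (mul_nonneg (hc _) (hc _))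
      (PointedCone.subset_hull (mem_union_right _ (mem_image_of_mem _ huv)))
  have hQ (v) (hv : v ∈ Q) : c v * φ v ≤ 0 :=
    mul_nonpos_of_nonneg_of_nonpos (hc v) (mem_filter.mp hv).2.le
  have hφQ : φ xQ = ∑ v ∈ Q, c v * φ v := by simp [xQ]
  have hφPQ : 0 ≤ φ xP + φ xQ := by simpa [hsplit] using hφx
  have hφQ0 : φ xQ ≤ 0 := hφQ ▸ sum_nonpos hQ
  rw [SetLike.mem_coe, hsplit]
  rcases (show 0 ≤ φ xP by linarith).eq_or_lt with hP0 | hP0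
  · have hxQ : xQ = 0 := sum_eq_zero fun v hv => by
      have := (sum_eq_zero_iff_of_nonpos hQ).mp (by linarith) v hv
      rw [(mul_eq_zero.mp this).resolve_right (mem_filter.mp hv).2.ne, zero_smul]
    simpa [hxQ] using hxP
  · have hx : xP + xQ = (φ xP)⁻¹ • ((φ xP + φ xQ) • xP + (φ xP • xQ - φ xQ • xP)) := by
      rw [smul_add, smul_smul, smul_sub, smul_smul, smul_smul, inv_mul_cancel₀ hP0.ne', one_smul,
        mul_add, inv_mul_cancel₀ hP0.ne', add_smul, one_smul]
      abel
    rw [hx]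
    exact H.smul_mem (inv_nonneg.mpr hP0.le) (add_mem (H.smul_mem hφPQ hxP) hpairs)

lemma coe_hull_fourierMotzkin (s : Finset V) (φ : Module.Dual ℝ V) :
    (PointedCone.hull ℝ (fourierMotzkin s φ : Set V) : Set V) =
      (PointedCone.hull ℝ (s : Set V) : Set V) ∩ {x | 0 ≤ φ x} :=
  (subset_hull_fourierMotzkin s φ).antisymm' fun _ hx => hull_fourierMotzkin_le s φ hx

lemma exists_finset_hull_eq_univ [FiniteDimensional ℝ V] :
    ∃ s : Finset V, (PointedCone.hull ℝ (s : Set V) : Set V) = Set.univ := by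
  set b := Module.finBasis ℝ V
  refine ⟨univ.image b ∪ univ.image (-b ·), Set.eq_univ_of_forall fun x => ?_⟩
  rw [SetLike.mem_coe, ← b.sum_repr x]
  refine Submodule.sum_mem _ fun i _ => ?_
  rcases le_total 0 (b.repr x i) with h | h
  · exact PointedCone.smul_mem _ h (PointedCone.subset_hull (by simp))
  · rw [← neg_neg (b.repr x i), neg_smul, ← smul_neg]
    exact PointedCone.smul_mem _ (neg_nonneg.mpr h) (PointedCone.subset_hull (by simp))

/-- Weyl's theorem, by Fourier–Motzkin elimination. -/
theorem exists_finset_hull_eq_setOf_nonneg [FiniteDimensional ℝ V]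
    (T : Finset (Module.Dual ℝ V)) :
    ∃ s : Finset V, (PointedCone.hull ℝ (s : Set V) : Set V) = {x | ∀ φ ∈ T, 0 ≤ φ x} := by
  induction T using Finset.induction_on with
  | empty => simpa using exists_finset_hull_eq_univ
  | insert ψ T _ ih =>
    obtain ⟨s, hs⟩ := ih
    refine ⟨fourierMotzkin s ψ, ?_⟩
    rw [coe_hull_fourierMotzkin, hs]
    ext x
    simp [and_comm]

end Cones

section Hoffman

variable {V : Type*} [NormedAddCommGroup V] [NormedSpace ℝ V] [FiniteDimensional ℝ V]

/-- Hoffman's error bound for a homogeneous system of linear inequalities. By Weyl's theorem the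
cone of pairs `(δ, x)` with `0 ≤ δ + φ i x` is spanned by finitely many generators `g`; those with
`g.1 = 0` solve the system and the others satisfy `‖g.2‖ ≤ R * g.1`. -/
theorem exists_hoffman_constant {ι : Type*} [Fintype ι] (φ : ι → Module.Dual ℝ V) :
    ∃ R ≥ 0, ∀ (x : V) (δ : ℝ), 0 ≤ δ → (∀ i, -δ ≤ φ i x) →
      ∃ y, (∀ i, 0 ≤ φ i y) ∧ ‖x - y‖ ≤ R * δ := by
  obtain ⟨s, hs⟩ := exists_finset_hull_eq_setOf_nonneg (insert (LinearMap.fst ℝ ℝ V)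
    (univ.image fun i => LinearMap.fst ℝ ℝ V + (φ i).comp (LinearMap.snd ℝ ℝ V)))
  have hmem (z : ℝ × V) : z ∈ PointedCone.hull ℝ (s : Set (ℝ × V)) ↔
      0 ≤ z.1 ∧ ∀ i, 0 ≤ z.1 + φ i z.2 := by
    rw [← SetLike.mem_coe, hs]
    simp
  have hgen (g) (hg : g ∈ s) := (hmem g).mp (PointedCone.subset_hull hg)
  set R := ∑ g ∈ s, ‖g.2‖ / g.1
  have hR (g) (hg : g ∈ s) (hg0 : g.1 ≠ 0) : ‖g.2‖ ≤ R * g.1 := by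
    have hpos : 0 < g.1 := lt_of_le_of_ne (hgen g hg).1 (Ne.symm hg0)
    rw [← div_le_iff₀ hpos]
    exact single_le_sum (f := fun g : ℝ × V => ‖g.2‖ / g.1)
      (fun g hg => div_nonneg (norm_nonneg _) (hgen g hg).1) hg
  refine ⟨R, sum_nonneg fun g hg => div_nonneg (norm_nonneg _) (hgen g hg).1,
    fun x δ hδ hx => ?_⟩
  obtain ⟨c, hc, hcx⟩ :=
    mem_hull_finset_iff.mp ((hmem (δ, x)).mpr ⟨hδ, fun i => by linarith [hx i]⟩)
  have hx' : ∑ g ∈ s, c g • g.2 = x := by simpa [Prod.snd_sum] using congrArg Prod.snd hcx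
  have hδ' : ∑ g ∈ s, c g * g.1 = δ := by simpa [Prod.fst_sum] using congrArg Prod.fst hcx
  refine ⟨∑ g ∈ s.filter (fun g => g.1 = 0), c g • g.2, fun i => ?_, ?_⟩
  · rw [map_sum]
    refine sum_nonneg fun g hg => ?_
    obtain ⟨hgs, hg0⟩ := mem_filter.mp hg
    simpa [hg0] using mul_nonneg (hc g) ((hgen g hgs).2 i)
  · rw [← hx', ← sum_filter_add_sum_filter_not s (fun g => g.1 = 0), add_sub_cancel_left]
    calc ‖∑ g ∈ s.filter (fun g => ¬ g.1 = 0), c g • g.2‖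
        ≤ ∑ g ∈ s.filter (fun g => ¬ g.1 = 0), R * (c g * g.1) := by
          refine (norm_sum_le _ _).trans (sum_le_sum fun g hg => ?_)
          obtain ⟨hgs, hg0⟩ := mem_filter.mp hg
          rw [norm_smul, Real.norm_of_nonneg (hc g), mul_left_comm]
          exact mul_le_mul_of_nonneg_left (hR g hgs hg0) (hc g)
      _ = R * δ := by
          rw [← mul_sum, ← hδ']
          congr 1
          exact sum_filter_of_ne fun g _ h => right_ne_zero_of_mul h

end Hoffman

section LatticeCount

variable {ι : Type*} [Fintype ι]

lemma exists_finset_card_le_forall_eq_zero (W : Submodule ℝ (ι → ℝ)) :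
    ∃ J : Finset ι, #J ≤ Module.finrank ℝ W ∧ ∀ x ∈ W, (∀ j ∈ J, x j = 0) → x = 0 := by
  induction hr : Module.finrank ℝ W using Nat.strong_induction_on generalizing W with
  | _ r ih =>
    by_cases hW : W = ⊥
    · exact ⟨∅, by simp, fun x hx _ => by simpa [hW] using hx⟩
    obtain ⟨w, hwW, hw0⟩ := (Submodule.ne_bot_iff W).mp hW
    obtain ⟨j, hj⟩ := Function.ne_iff.mp hw0
    set W' := W ⊓ LinearMap.ker (LinearMap.proj j : (ι → ℝ) →ₗ[ℝ] ℝ)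
    have hlt : Module.finrank ℝ W' < r :=
      hr ▸ Submodule.finrank_lt_finrank_of_lt (inf_lt_left.mpr fun h => hj (h hwW))
    obtain ⟨J, hJ, hJW'⟩ := ih _ hlt W' rfl
    refine ⟨insert j J, (card_insert_le _ _).trans (by omega), fun x hx hxJ => ?_⟩
    exact hJW' x ⟨hx, hxJ j (mem_insert_self _ _)⟩
      fun j' hj' => hxJ j' (mem_insert_of_mem hj')

lemma card_le_of_forall_norm_sub_le (K : Finset (ι → ℕ)) {δ : ℝ}
    (hK : ∀ k ∈ K, ∀ k' ∈ K, ‖(fun i => (k i : ℝ)) - fun i => (k' i : ℝ)‖ ≤ δ) :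
    #K ≤ (2 * ⌊δ⌋₊ + 1) ^ Fintype.card ι := by
  obtain rfl | ⟨k₀, hk₀⟩ := K.eq_empty_or_nonempty
  · simp
  set q := ⌊δ⌋₊
  calc #K ≤ #(Fintype.piFinset fun i => Icc (k₀ i - q) (k₀ i + q)) := by
        refine card_le_card fun k hk => Fintype.mem_piFinset.mpr fun i => ?_
        have hki := (norm_le_pi_norm _ i).trans (hK k hk k₀ hk₀)
        rw [Pi.sub_apply, Real.norm_eq_abs, abs_le] at hki
        have hq : δ < q + 1 := Nat.lt_floor_add_one δ
        have h1 : (k i : ℝ) < k₀ i + q + 1 := by linarith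
        have h2 : (k₀ i : ℝ) < k i + q + 1 := by linarith
        norm_cast at h1 h2
        exact mem_Icc.mpr ⟨by omega, by omega⟩
    _ ≤ (2 * q + 1) ^ Fintype.card ι := by
        rw [Fintype.card_piFinset, ← card_univ]
        exact prod_le_pow_card _ _ _ fun i _ => by rw [Nat.card_Icc]; omega

lemma card_image_restrict_le (K : Finset (ι → ℕ)) (J : Finset ι) {s : ℕ}
    (hK : ∀ k ∈ K, ∑ i, k i = s) : #(K.image fun k (j : J) => k j) ≤ (s + 1) ^ #J := by
  calc #(K.image fun k (j : J) => k j)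
      ≤ #(Fintype.piFinset fun _ : J => range (s + 1)) := by
        refine card_le_card fun x hx => ?_
        obtain ⟨k, hk, rfl⟩ := mem_image.mp hx
        refine Fintype.mem_piFinset.mpr fun j => mem_range.mpr (Nat.lt_succ_of_le ?_)
        exact hK k hk ▸ single_le_sum (fun _ _ => Nat.zero_le _) (mem_univ _)
    _ = (s + 1) ^ #J := by simp

/-- On `U` the coordinate sum and the coordinates in `J` form an injective linear map, hence one
with a Lipschitz inverse; so points within `ρ` of `U` on which these agree are `O(ρ)` apart. -/
lemma exists_norm_sub_le_of_forall_eq (U : Submodule ℝ (ι → ℝ)) (J : Finset ι)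
    (hJ : ∀ x ∈ U ⊓ LinearMap.ker (dotProductEquiv ℝ ι 1), (∀ j ∈ J, x j = 0) → x = 0) :
    ∃ D ≥ 0, ∀ (x x' y y' : ι → ℝ) (ρ : ℝ), y ∈ U → y' ∈ U → ‖x - y‖ ≤ ρ → ‖x' - y'‖ ≤ ρ →
      ∑ i, x i = ∑ i, x' i → (∀ j ∈ J, x j = x' j) → ‖x - x'‖ ≤ D * ρ := by
  set Φ : (ι → ℝ) →L[ℝ] ℝ × (J → ℝ) := LinearMap.toContinuousLinearMap
    ((dotProductEquiv ℝ ι 1 : Module.Dual ℝ (ι → ℝ)).prod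
      (LinearMap.pi fun j : J => LinearMap.proj (j : ι)))
  have hΦ : LinearMap.ker ((Φ : (ι → ℝ) →ₗ[ℝ] ℝ × (J → ℝ)).domRestrict U) = ⊥ := by
    refine LinearMap.ker_eq_bot'.mpr fun x hx => Subtype.ext (hJ x ⟨x.2, ?_⟩ fun j hj => ?_)
    · exact congrArg Prod.fst hx
    · exact congrFun (congrArg Prod.snd hx) ⟨j, hj⟩
  obtain ⟨L, -, hL⟩ := LinearMap.exists_antilipschitzWith _ hΦ
  refine ⟨2 * (1 + L * ‖Φ‖), by positivity, fun x x' y y' ρ hy hy' hxy hx'y' hsum hJx => ?_⟩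
  have hΦ0 : Φ (x - x') = 0 := Prod.ext (by simpa [Φ, one_dotProduct, sub_eq_zero] using hsum)
    (funext fun j => by simpa [Φ, sub_eq_zero] using hJx j j.2)
  have hΦyy' : ‖Φ (y - y')‖ ≤ ‖Φ‖ * (2 * ρ) := by
    rw [show y - y' = (y - x) + (x - x') + (x' - y') by abel, map_add, map_add, hΦ0, add_zero]
    calc _ ≤ ‖Φ‖ * ‖y - x‖ + ‖Φ‖ * ‖x' - y'‖ :=
          (norm_add_le _ _).trans (add_le_add (Φ.le_opNorm _) (Φ.le_opNorm _))
      _ ≤ ‖Φ‖ * (2 * ρ) := by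
          rw [norm_sub_rev] at hxy
          nlinarith [norm_nonneg Φ]
  have hyy' : ‖y - y'‖ ≤ L * ‖Φ (y - y')‖ :=
    ZeroHomClass.bound_of_antilipschitz _ hL ⟨y - y', sub_mem hy hy'⟩
  calc ‖x - x'‖ = ‖(x - y) + (y - y') + (y' - x')‖ := by congr 1; abel
    _ ≤ ‖x - y‖ + ‖y - y'‖ + ‖y' - x'‖ := norm_add₃_le
    _ ≤ ρ + L * (‖Φ‖ * (2 * ρ)) + ρ := by
        gcongr
        · exact hyy'.trans (by gcongr)
        · rwa [norm_sub_rev]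
    _ = 2 * (1 + L * ‖Φ‖) * ρ := by ring

/-- Take `#J ≤ r` coordinates on which `U ∩ ker ν` injects: they take at most `(s + 1) ^ r` values
on the lattice points, and points sharing them are `O(ρ)` apart. -/
theorem exists_card_le_of_forall_exists_norm_sub_le (U : Submodule ℝ (ι → ℝ)) {r : ℕ}
    (hr : Module.finrank ℝ ↥(U ⊓ LinearMap.ker (dotProductEquiv ℝ ι 1)) ≤ r) :
    ∃ C > 0, ∀ (s : ℕ) (ρ : ℝ), 0 ≤ ρ → ∀ K : Finset (ι → ℕ),
      (∀ k ∈ K, ∑ i, k i = s ∧ ∃ y ∈ U, ‖(fun i => (k i : ℝ)) - y‖ ≤ ρ) →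
      (#K : ℝ) ≤ C * (ρ + 1) ^ Fintype.card ι * (s + 1) ^ r := by
  obtain ⟨J, hJr, hJ⟩ :=
    exists_finset_card_le_forall_eq_zero (U ⊓ LinearMap.ker (dotProductEquiv ℝ ι 1))
  obtain ⟨D, hD, hclose⟩ := exists_norm_sub_le_of_forall_eq U J hJ
  refine ⟨(2 * D + 1) ^ Fintype.card ι, by positivity, fun s ρ hρ K hK => ?_⟩
  have hcard := card_le_mul_card_image (f := fun k (j : J) => k j) K
    ((2 * ⌊D * ρ⌋₊ + 1) ^ Fintype.card ι) fun b _ =>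
      card_le_of_forall_norm_sub_le _ fun k hkb k' hk'b => by
        obtain ⟨hk, rfl⟩ := mem_filter.mp hkb
        obtain ⟨hk', hkk'⟩ := mem_filter.mp hk'b
        obtain ⟨hks, y, hy, hky⟩ := hK k hk
        obtain ⟨hk's, y', hy', hky'⟩ := hK k' hk'
        refine hclose _ _ y y' ρ hy hy' hky hky' (by exact_mod_cast hks.trans hk's.symm)
          fun j hj => ?_
        simpa using congrFun hkk'.symm ⟨j, hj⟩
  have himage := card_image_restrict_le K J fun k hk => (hK k hk).1
  have hfloor : (2 * ⌊D * ρ⌋₊ + 1 : ℝ) ≤ (2 * D + 1) * (ρ + 1) := by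
    nlinarith [Nat.floor_le (by positivity : 0 ≤ D * ρ)]
  calc (#K : ℝ) ≤ (2 * ⌊D * ρ⌋₊ + 1 : ℝ) ^ Fintype.card ι * (s + 1) ^ #J := by
        exact_mod_cast hcard.trans (Nat.mul_le_mul_left _ himage)
    _ ≤ ((2 * D + 1) * (ρ + 1)) ^ Fintype.card ι * (s + 1) ^ r := by
        gcongr
        · linarith [s.cast_nonneg (α := ℝ)]
        · exact hJr.trans hr
    _ = _ := by rw [mul_pow]

end LatticeCount

section Support

variable {ι : Type*} [Fintype ι]

/-- Separate `Δ` from the open orthant below `q`. The closure of that orthant contains `q` and each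
`q - eᵢ`, so the separating functional attains its level at `q` and has nonnegative coefficients. -/
lemma exists_nonneg_supporting_of_forall_not_lt {Δ : Set (ι → ℝ)} (hΔ : Convex ℝ Δ)
    {q : ι → ℝ} (hq : q ∈ Δ) (hmin : ∀ x ∈ Δ, ¬ ∀ i, x i < q i) :
    ∃ a : ι → ℝ, 0 ≤ a ∧ 0 < ∑ i, a i ∧ ∀ x ∈ Δ, a ⬝ᵥ q ≤ a ⬝ᵥ x := by
  set O := Set.univ.pi fun i => Set.Iio (q i)
  have hdisj : Disjoint O Δ := Set.disjoint_left.mpr fun x hxO hxΔ =>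
    hmin x hxΔ fun i => hxO i (Set.mem_univ i)
  obtain ⟨φ, u, hφO, hφΔ⟩ := geometric_hahn_banach_open (convex_pi fun i _ => convex_Iio _)
    (isOpen_set_pi Set.finite_univ fun i _ => isOpen_Iio) hΔ hdisj
  have hle (x) (hx : x ≤ q) : φ x ≤ u := by
    have hxO : x ∈ closure O := by
      rw [closure_pi_set]
      exact fun i _ => by simpa [closure_Iio] using hx i
    exact closure_minimal (fun y hy => (hφO y hy).le)
      (isClosed_le φ.continuous continuous_const) hxO
  have hφq : φ q = u := le_antisymm (hle q le_rfl) (hφΔ q hq)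
  set a := (dotProductEquiv ℝ ι).symm φ.toLinearMap
  have hφa (x) : φ x = a ⬝ᵥ x := by
    rw [← dotProductEquiv_apply_apply, LinearEquiv.apply_symm_apply]
    rfl
  refine ⟨a, fun i => ?_, ?_, fun x hx => ?_⟩
  · have := hle (q - Pi.single i 1) (sub_le_self _ (Pi.single_nonneg.mpr zero_le_one))
    rw [map_sub, hφq, hφa, dotProduct_single, mul_one] at this
    simpa using this
  · have := hφO (q - 1) fun i _ => by simp
    rw [map_sub, hφq, hφa, dotProduct_one] at this
    linarith
  · rw [← hφa, ← hφa, hφq]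
    exact hφΔ x hx

end Support

lemma pow_mul_pow_mul_inv_pow_le {σ : ℝ} (hσ : 0 < σ) (a b : ℕ) {m : ℕ} (hm : 0 < m) {p : ℝ}
    (hp : 2 ≤ p) (j : ℕ) :
    ((↑(⌈σ * m⌉₊ + j) : ℝ) - σ * m + 1) ^ a * ((↑(⌈σ * m⌉₊ + j) : ℝ) + 1) ^ b *
        (p ^ (⌈σ * m⌉₊ + j))⁻¹ ≤
      (σ + 2) ^ b * (m : ℝ) ^ b * p ^ (-(m : ℝ) * σ) * (((j : ℝ) + 2) ^ (a + b) * 2⁻¹ ^ j) := by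
  set s₀ := ⌈σ * m⌉₊
  have hm1 : (1 : ℝ) ≤ m := by exact_mod_cast hm
  have h1 : σ * m ≤ s₀ := Nat.le_ceil _
  have h2 : (s₀ : ℝ) < σ * m + 1 := Nat.ceil_lt_add_one (by positivity)
  have hA : ((↑(s₀ + j) : ℝ) - σ * m + 1) ^ a ≤ ((j : ℝ) + 2) ^ a :=
    pow_le_pow_left₀ (by push_cast; linarith) (by push_cast; linarith) a
  have hB : ((↑(s₀ + j) : ℝ) + 1) ^ b ≤ ((σ + 2) * m * ((j : ℝ) + 2)) ^ b :=
    pow_le_pow_left₀ (by positivity) (by push_cast; nlinarith) b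
  have hP : (p ^ (s₀ + j))⁻¹ ≤ p ^ (-(m : ℝ) * σ) * 2⁻¹ ^ j := by
    rw [pow_add, mul_inv, ← Real.rpow_natCast, ← Real.rpow_neg (by positivity), ← inv_pow]
    gcongr
    · linarith
    · linarith
  calc _ ≤ ((j : ℝ) + 2) ^ a * ((σ + 2) * m * ((j : ℝ) + 2)) ^ b * (p ^ (-(m : ℝ) * σ) * 2⁻¹ ^ j) :=
        mul_le_mul (mul_le_mul hA hB (by positivity) (by positivity)) hP (by positivity)
          (by positivity)
    _ = _ := by simp only [mul_pow, pow_add]; ring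

/-- With `s = ⌈σ m⌉ + j`, the `s`-th term is bounded by `(σ + 2) ^ b m ^ b p ^ (-m σ)` times the
`j`-th term of the convergent series `∑ (j + 2) ^ (a + b) 2⁻ʲ`. -/
lemma exists_sum_le_rpow_mul_pow {σ : ℝ} (hσ : 0 < σ) (a b : ℕ) :
    ∃ c > 0, ∀ m : ℕ, 0 < m → ∀ p : ℝ, 2 ≤ p → ∀ S : Finset ℕ, (∀ s ∈ S, σ * m ≤ s) →
      ∑ s ∈ S, ((s : ℝ) - σ * m + 1) ^ a * ((s : ℝ) + 1) ^ b * (p ^ s)⁻¹ ≤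
        c * p ^ (-(m : ℝ) * σ) * (m : ℝ) ^ b := by
  set G : ℕ → ℝ := fun j => ((j : ℝ) + 2) ^ (a + b) * 2⁻¹ ^ j
  have hG : Summable G := by
    refine (((summable_nat_add_iff 2).mpr (summable_pow_mul_geometric_of_norm_lt_one (a + b)
      (r := (2⁻¹ : ℝ)) (by norm_num))).mul_left 4).congr fun j => ?_
    simp only [G, pow_add]
    push_cast
    ring
  have hG0 (j) : 0 ≤ G j := by positivity
  refine ⟨(σ + 2) ^ b * ∑' j, G j, mul_pos (by positivity) (hG.tsum_pos hG0 0 (by positivity)),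
    fun m hm p hp S hS => ?_⟩
  have hS₀ (s) (hs : s ∈ S) : ⌈σ * m⌉₊ ≤ s := Nat.ceil_le.mpr (hS s hs)
  calc _ ≤ ∑ s ∈ S, (σ + 2) ^ b * (m : ℝ) ^ b * p ^ (-(m : ℝ) * σ) * G (s - ⌈σ * m⌉₊) := by
        refine sum_le_sum fun s hs => ?_
        obtain ⟨j, rfl⟩ := Nat.exists_eq_add_of_le (hS₀ s hs)
        simpa [G] using pow_mul_pow_mul_inv_pow_le hσ a b hm hp j
    _ ≤ (σ + 2) ^ b * (m : ℝ) ^ b * p ^ (-(m : ℝ) * σ) * ∑' j, G j := by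
        rw [← mul_sum]
        gcongr
        rw [← sum_image fun s hs t ht hst => by
          have := hS₀ s hs; have := hS₀ t ht; omega]
        exact hG.sum_le_tsum _ fun j _ => hG0 j
    _ = _ := by ring

section NewtonPolyhedron

variable {n : ℕ} {f : MvPolynomial (Fin n) ℤ}

lemma mem_NewtonΔ_of_mem_support {d : Fin n →₀ ℕ} (hd : d ∈ f.support) :
    (fun i => (d i : ℝ)) ∈ NewtonΔ f :=
  ⟨_, subset_convexHull ℝ _ ⟨d, hd, rfl⟩, 0, fun _ => le_rfl, (add_zero _).symm⟩

lemma mem_NewtonΔ_of_le {x y : Fin n → ℝ} (hx : x ∈ NewtonΔ f) (hxy : x ≤ y) :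
    y ∈ NewtonΔ f := by
  obtain ⟨a, ha, b, hb, rfl⟩ := hx
  exact ⟨a, ha, y - a, fun i => sub_nonneg.mpr ((le_add_of_nonneg_right (hb i)).trans (hxy i)),
    by abel⟩

lemma convex_NewtonΔ (f : MvPolynomial (Fin n) ℤ) : Convex ℝ (NewtonΔ f) := by
  rintro _ ⟨a, ha, b, hb, rfl⟩ _ ⟨a', ha', b', hb', rfl⟩ s t hs ht hst
  refine ⟨s • a + t • a', convex_convexHull ℝ _ ha ha' hs ht hst, s • b + t • b',
    fun i => ?_, by simp only [smul_add]; abel⟩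
  simpa using add_nonneg (mul_nonneg hs (hb i)) (mul_nonneg ht (hb' i))

lemma le_dotProduct_of_mem_NewtonΔ {k x : Fin n → ℝ} {c : ℝ} (hk : 0 ≤ k)
    (hc : ∀ d ∈ f.support, c ≤ k ⬝ᵥ fun i => (d i : ℝ)) (hx : x ∈ NewtonΔ f) : c ≤ k ⬝ᵥ x := by
  obtain ⟨a, ha, b, hb, rfl⟩ := hx
  have hhull : convexHull ℝ (suppSet f) ⊆ {x | c ≤ k ⬝ᵥ x} :=
    convexHull_min (by rintro _ ⟨d, hd, rfl⟩; exact hc d hd)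
      (convex_halfSpace_ge (dotProductEquiv ℝ (Fin n) k).isLinear c)
  have hb' : 0 ≤ k ⬝ᵥ b := dotProduct_nonneg_of_nonneg hk hb
  have ha' : c ≤ k ⬝ᵥ a := hhull ha
  rw [dotProduct_add]
  linarith

lemma Nfun_le_dotProduct {k x : Fin n → ℝ} (hk : 0 ≤ k) (hx : x ∈ NewtonΔ f) :
    Nfun (NewtonΔ f) k ≤ k ⬝ᵥ x := by
  refine csInf_le ⟨0, ?_⟩ ⟨x, hx, rfl⟩
  rintro _ ⟨y, hy, rfl⟩
  exact le_dotProduct_of_mem_NewtonΔ hk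
    (fun d _ => dotProduct_nonneg_of_nonneg hk fun i => Nat.cast_nonneg _) hy

lemma le_Nfun_iff {k : Fin n → ℝ} {c : ℝ} (hk : 0 ≤ k) (hΔ : (NewtonΔ f).Nonempty) :
    c ≤ Nfun (NewtonΔ f) k ↔ ∀ d ∈ f.support, c ≤ k ⬝ᵥ fun i => (d i : ℝ) := by
  refine ⟨fun h d hd => h.trans (Nfun_le_dotProduct hk (mem_NewtonΔ_of_mem_support hd)),
    fun h => ?_⟩
  obtain ⟨x, hx⟩ := hΔ
  refine le_csInf ⟨_, x, hx, rfl⟩ ?_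
  rintro _ ⟨y, hy, rfl⟩
  exact le_dotProduct_of_mem_NewtonΔ hk h hy

variable {σ : ℝ}

/-- The cone `{k ∈ ℝ₊ⁿ | ν(k) = σ N(k)}`, whose span has dimension `κ`. -/
def equalityCone (f : MvPolynomial (Fin n) ℤ) (σ : ℝ) : Set (Fin n → ℝ) :=
  {k | (∀ i, 0 ≤ k i) ∧ ∑ i, k i = σ * Nfun (NewtonΔ f) k}

lemma mul_Nfun_le_sum (hσ : 0 < σ) (hq : (fun _ => 1 / σ) ∈ NewtonΔ f) {k : Fin n → ℝ}
    (hk : 0 ≤ k) : σ * Nfun (NewtonΔ f) k ≤ ∑ i, k i := by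
  have h : Nfun (NewtonΔ f) k ≤ ∑ i, k i * (1 / σ) := Nfun_le_dotProduct hk hq
  rw [← sum_mul, mul_one_div, le_div_iff₀ hσ] at h
  linarith

lemma mem_equalityCone_iff (hσ : 0 < σ) (hq : (fun _ => 1 / σ) ∈ NewtonΔ f) {k : Fin n → ℝ} :
    k ∈ equalityCone f σ ↔ 0 ≤ k ∧ ∀ d ∈ f.support, ∑ i, k i ≤ σ * (k ⬝ᵥ fun i => (d i : ℝ)) := by
  refine and_congr_right fun hk => ?_
  rw [le_antisymm_iff, and_iff_left (mul_Nfun_le_sum hσ hq hk), ← div_le_iff₀' hσ,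
    le_Nfun_iff hk ⟨_, hq⟩]
  simp_rw [div_le_iff₀' hσ]

lemma equalityCone_subset_vectorSpan (hσ : 0 < σ) (hq : (fun _ => 1 / σ) ∈ NewtonΔ f) :
    equalityCone f σ ⊆ vectorSpan ℝ (equalityCone f σ) := fun k hk => by
  have h0 : 0 ∈ equalityCone f σ := (mem_equalityCone_iff hσ hq).mpr ⟨le_rfl, by simp⟩
  simpa using vsub_mem_vectorSpan ℝ hk h0

/-- The diagonal point `q = (1/σ, …, 1/σ)` lies on the boundary of the Newton polyhedron; a
supporting hyperplane there has a nonnegative normal `a`, and `N(a) = ⟨a, q⟩ = ν(a) / σ`. -/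
lemma exists_mem_equalityCone_sum_pos (hσ : 0 < σ)
    (hfirst : IsLeast {t : ℝ | 0 ≤ t ∧ (fun _ : Fin n => t) ∈ NewtonΔ f} (1 / σ)) :
    ∃ a ∈ equalityCone f σ, 0 < ∑ i, a i := by
  have hq := hfirst.1.2
  have hmin (x) (hx : x ∈ NewtonΔ f) : ¬ ∀ i, x i < 1 / σ := fun hlt => by
    set t := (insert 0 (univ.image x)).max' (insert_nonempty _ _)
    have hxt : x ≤ fun _ => t := fun i => le_max' _ _ (by simp)
    have ht : t < 1 / σ := (max'_lt_iff _ _).mpr (by simpa [hσ] using hlt)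
    exact ht.not_ge (hfirst.2 ⟨le_max' _ _ (by simp), mem_NewtonΔ_of_le hx hxt⟩)
  obtain ⟨a, ha, ha_pos, hsupp⟩ :=
    exists_nonneg_supporting_of_forall_not_lt (convex_NewtonΔ f) hq hmin
  have hN : Nfun (NewtonΔ f) a = a ⬝ᵥ fun _ => 1 / σ :=
    le_antisymm (Nfun_le_dotProduct ha hq) <| le_csInf ⟨_, _, hq, rfl⟩ <| by
      rintro _ ⟨x, hx, rfl⟩
      exact hsupp x hx
  refine ⟨a, ⟨ha, ?_⟩, ha_pos⟩
  rw [hN]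
  simp only [dotProduct, ← sum_mul]
  field_simp

lemma finrank_inf_ker_lt (hσ : 0 < σ)
    (hfirst : IsLeast {t : ℝ | 0 ≤ t ∧ (fun _ : Fin n => t) ∈ NewtonΔ f} (1 / σ)) :
    Module.finrank ℝ ↥(vectorSpan ℝ (equalityCone f σ) ⊓
        LinearMap.ker (dotProductEquiv ℝ (Fin n) 1)) <
      Module.finrank ℝ (vectorSpan ℝ (equalityCone f σ)) := by
  obtain ⟨a, haE, ha⟩ := exists_mem_equalityCone_sum_pos hσ hfirst
  refine Submodule.finrank_lt_finrank_of_lt (inf_lt_left.mpr fun h => ?_)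
  have := h (equalityCone_subset_vectorSpan hσ hfirst.1.2 haE)
  simp only [LinearMap.mem_ker, dotProductEquiv_apply_apply, one_dotProduct] at this
  linarith

/-- By Hoffman's bound for the inequalities `0 ≤ kᵢ` and `ν(k) ≤ σ ⟨k, d⟩`, a lattice point with
`ν(k) = s` and `N(k) ≥ m` lies within `O(s - σ m)` of the equality cone. -/
theorem exists_card_le_of_le_Nfun (hσ : 0 < σ) (hq : (fun _ => 1 / σ) ∈ NewtonΔ f) {r : ℕ}
    (hr : Module.finrank ℝ ↥(vectorSpan ℝ (equalityCone f σ) ⊓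
      LinearMap.ker (dotProductEquiv ℝ (Fin n) 1)) ≤ r) :
    ∃ C > 0, ∀ (m : ℝ) (s : ℕ), σ * m ≤ s → ∀ K : Finset (Fin n → ℕ),
      (∀ k ∈ K, ∑ i, k i = s ∧ m ≤ Nfun (NewtonΔ f) (fun i => (k i : ℝ))) →
      (#K : ℝ) ≤ C * ((s : ℝ) - σ * m + 1) ^ n * ((s : ℝ) + 1) ^ r := by
  set φ : Fin n ⊕ f.support → Module.Dual ℝ (Fin n → ℝ) := Sum.elim (fun i => LinearMap.proj i)
    fun d => dotProductEquiv ℝ (Fin n) (σ • (fun i => (d.1 i : ℝ)) - 1)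
  have hφ (k : Fin n → ℝ) (j) : φ j k = Sum.elim (fun i => k i)
      (fun d => σ * (k ⬝ᵥ fun i => (d.1 i : ℝ)) - ∑ i, k i) j := by
    rcases j with i | d <;> simp [φ, dotProduct_one, dotProduct_comm]
  have hE (y) (hy : ∀ j, 0 ≤ φ j y) : y ∈ vectorSpan ℝ (equalityCone f σ) :=
    equalityCone_subset_vectorSpan hσ hq <| (mem_equalityCone_iff hσ hq).mpr
      ⟨fun i => by simpa [hφ] using hy (.inl i), fun d hd => by simpa [hφ] using hy (.inr ⟨d, hd⟩)⟩
  obtain ⟨R, hR0, hR⟩ := exists_hoffman_constant φ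
  obtain ⟨C, hC, hcount⟩ :=
    exists_card_le_of_forall_exists_norm_sub_le (vectorSpan ℝ (equalityCone f σ)) hr
  refine ⟨C * (R + 1) ^ n, by positivity, fun m s hs K hK => ?_⟩
  have ht : 0 ≤ (s : ℝ) - σ * m := by linarith
  have hnear (k) (hk : k ∈ K) : ∑ i, k i = s ∧ ∃ y ∈ vectorSpan ℝ (equalityCone f σ),
      ‖(fun i => (k i : ℝ)) - y‖ ≤ R * ((s : ℝ) - σ * m) := by
    obtain ⟨hks, hkm⟩ := hK k hk
    have hlow (j) : -((s : ℝ) - σ * m) ≤ φ j fun i => (k i : ℝ) := by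
      rcases j with i | ⟨d, hd⟩
      · simp only [hφ, Sum.elim_inl]
        linarith [(k i).cast_nonneg (α := ℝ)]
      · have hkd := (le_Nfun_iff (fun i => (k i).cast_nonneg) ⟨_, hq⟩).mp hkm d hd
        have hks' : ∑ i, (k i : ℝ) = s := by exact_mod_cast hks
        simp only [hφ, Sum.elim_inr, hks']
        nlinarith
    obtain ⟨y, hy, hky⟩ := hR _ _ ht hlow
    exact ⟨hks, y, hE y hy, hky⟩
  calc (#K : ℝ) ≤ C * (R * ((s : ℝ) - σ * m) + 1) ^ Fintype.card (Fin n) * ((s : ℝ) + 1) ^ r :=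
        hcount s _ (by positivity) K hnear
    _ ≤ C * ((R + 1) * ((s : ℝ) - σ * m + 1)) ^ n * ((s : ℝ) + 1) ^ r := by
        rw [Fintype.card_fin]
        gcongr
        nlinarith
    _ = _ := by rw [mul_pow]; ring

theorem exists_sum_inv_pow_le (hσ : 0 < σ) (hq : (fun _ => 1 / σ) ∈ NewtonΔ f) {r : ℕ}
    (hr : Module.finrank ℝ ↥(vectorSpan ℝ (equalityCone f σ) ⊓
      LinearMap.ker (dotProductEquiv ℝ (Fin n) 1)) ≤ r) :
    ∃ c > 0, ∀ m : ℕ, 0 < m → ∀ p : ℝ, 2 ≤ p → ∀ F : Finset (Fin n → ℕ),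
      (∀ k ∈ F, (m : ℝ) ≤ Nfun (NewtonΔ f) fun i => (k i : ℝ)) →
      ∑ k ∈ F, (p ^ ∑ i, k i)⁻¹ ≤ c * p ^ (-(m : ℝ) * σ) * (m : ℝ) ^ r := by
  obtain ⟨C, hC, hcount⟩ := exists_card_le_of_le_Nfun hσ hq hr
  obtain ⟨c, hc, hsum⟩ := exists_sum_le_rpow_mul_pow hσ n r
  refine ⟨C * c, by positivity, fun m hm p hp F hF => ?_⟩
  have hs (k) (hk : k ∈ F) : σ * m ≤ (∑ i, k i : ℕ) := by
    have := mul_Nfun_le_sum hσ hq (k := fun i => (k i : ℝ)) fun i => (k i).cast_nonneg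
    push_cast
    nlinarith [hF k hk]
  calc ∑ k ∈ F, (p ^ ∑ i, k i)⁻¹
      = ∑ s ∈ F.image (fun k : Fin n → ℕ => ∑ i, k i),
          #(F.filter fun k => ∑ i, k i = s) • (p ^ s)⁻¹ :=
        sum_comp (fun s : ℕ => (p ^ s)⁻¹) _
    _ ≤ ∑ s ∈ F.image (fun k : Fin n → ℕ => ∑ i, k i),
        C * (((s : ℝ) - σ * m + 1) ^ n * ((s : ℝ) + 1) ^ r * (p ^ s)⁻¹) := by
        refine sum_le_sum fun s hs' => ?_
        obtain ⟨k, hk, rfl⟩ := mem_image.mp hs'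
        rw [nsmul_eq_mul, ← mul_assoc, ← mul_assoc]
        gcongr
        exact hcount m _ (hs k hk) _ fun k' hk' =>
          ⟨(mem_filter.mp hk').2, hF k' (mem_filter.mp hk').1⟩
    _ ≤ C * (c * p ^ (-(m : ℝ) * σ) * (m : ℝ) ^ r) := by
        rw [← mul_sum]
        gcongr
        refine hsum m hm p hp _ fun s hs' => ?_
        obtain ⟨k, hk, rfl⟩ := mem_image.mp hs'
        exact hs k hk
    _ = _ := by ring

end NewtonPolyhedron

lemma Afun_le_of_forall_sum_le {n : ℕ} {f : MvPolynomial (Fin n) ℤ} {p m : ℕ}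
    {τ : Set (Fin n → ℝ)} {B : ℝ} (hB : 0 ≤ B)
    (h : ∀ F : Finset (Fin n → ℕ), (∀ k ∈ F, (m : ℝ) ≤ Nfun (NewtonΔ f) fun i => (k i : ℝ)) →
      ∑ k ∈ F, ((p : ℝ) ^ ∑ i, k i)⁻¹ ≤ B) :
    Afun f p m τ ≤ B := by
  refine tsum_le_of_sum_le' hB fun F => ?_
  rw [← sum_filter]
  refine (sum_le_sum_of_subset_of_nonneg
    (monotone_filter_right F fun _ _ hk => hk.2) fun _ _ _ => by positivity).trans ?_
  exact h _ fun k hk => (mem_filter.mp hk).2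

theorem A_bound_general
    (n : ℕ) (f : MvPolynomial (Fin n) ℤ)
    (σ : ℝ) (hσ : 0 < σ)
    (hfirst : IsLeast {t : ℝ | 0 ≤ t ∧ (fun _ : Fin n => t) ∈ NewtonΔ f} (1 / σ))
    (κ : ℕ)
    (hκ : κ = Module.finrank ℝ (vectorSpan ℝ
      {k : Fin n → ℝ | (∀ i, 0 ≤ k i) ∧ ∑ i, k i = σ * Nfun (NewtonΔ f) k})) :
    1 ≤ κ ∧ ∃ c : ℝ, 0 < c ∧ ∃ M : ℕ,
      ∀ m : ℕ, 0 < m → ∀ τ : Set (Fin n → ℝ), IsFaceOf (NewtonΔ f) τ →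
        ∀ p : ℕ, p.Prime → M < p →
          Afun f p m τ ≤ c * (p : ℝ) ^ (-(m : ℝ) * σ) * (m : ℝ) ^ (κ - 1) := by
  have hrank : _ < κ := hκ ▸ finrank_inf_ker_lt hσ hfirst
  obtain ⟨c, hc, hsum⟩ := exists_sum_inv_pow_le hσ hfirst.1.2 (r := κ - 1) (by omega)
  refine ⟨by omega, c, hc, 0, fun m hm τ _ p hp _ => ?_⟩
  exact Afun_le_of_forall_sum_le (by positivity) (hsum m hm p (by exact_mod_cast hp.two_le))

/-- bound `A(p,m,τ) ≤ c p^{-mσ} m^{κ-1}` for large `p`,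
uniformly in the faces `τ`, together with `κ ≥ 1`. -/
theorem A_bound
    (n : ℕ) (f : MvPolynomial (Fin n) ℤ) (hf : f ≠ 0)
    (hf0 : constantCoeff f = 0) (hnd : Nondeg f)
    (σ : ℝ) (hσ : 0 < σ)
    (hfirst : IsLeast {t : ℝ | 0 ≤ t ∧ (fun _ : Fin n => t) ∈ NewtonΔ f} (1 / σ))
    (κ : ℕ)
    (hκ : κ = Module.finrank ℝ (vectorSpan ℝ
      {k : Fin n → ℝ | (∀ i, 0 ≤ k i) ∧ ∑ i, k i = σ * Nfun (NewtonΔ f) k})) :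
    1 ≤ κ ∧ ∃ c : ℝ, 0 < c ∧ ∃ M : ℕ,
      ∀ m : ℕ, 0 < m → ∀ τ : Set (Fin n → ℝ), IsFaceOf (NewtonΔ f) τ →
        ∀ p : ℕ, p.Prime → M < p →
          Afun f p m τ ≤ c * (p : ℝ) ^ (-(m : ℝ) * σ) * (m : ℝ) ^ (κ - 1) :=
  A_bound_general n f σ hσ hfirst κ hκ
end
end
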